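/- In ℝ², given positive samples x_i⁺ and negative samples x_j⁻ (all first coordinates of pairs distinct), let S be the finite set of critical slopes s_{ij} = −(x⁺_{i,2} − x⁻_{j,2})/(x⁺_{i,1} − x⁻_{j,1}). Then the AUC of w(s) = (s, 1), as a function of s, is constant on every open interval contained in ℝ \ S. In particular, AUC restricted to classifiers of the form (s,1) attains only finitely many values. -/

import Mathlib

/-! For `w(s) = (s, 1)` the pair `(i, j)` is ranked correctly iff `s · d + e > 0`, where
`d = x⁺_{i,1} - x⁻_{j,1}` and `e = x⁺_{i,2} - x⁻_{j,2}`. This affine function of `s` changes sign only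
at its root `-e / d` (if `d = 0` it is constant), so every pair indicator, hence the AUC, is constant on
an interval avoiding `S`. Finiteness needs no geometry: the AUC only depends on which of the finitely
many pairs are ranked correctly. -/

open scoped RealInnerProductSpace BigOperators

noncomputable def AUC {np nn : ℕ} (xp : Fin np → EuclideanSpace ℝ (Fin 2))
    (xn : Fin nn → EuclideanSpace ℝ (Fin 2)) (w : EuclideanSpace ℝ (Fin 2)) : ℝ :=
  (1 / ((np : ℝ) * (nn : ℝ))) *
    ∑ i : Fin np, ∑ j : Fin nn, if ⟪w, xp i⟫ > ⟪w, xn j⟫ then (1 : ℝ) else 0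

open Set

lemma EuclideanSpace.inner_fin_two (v x : EuclideanSpace ℝ (Fin 2)) :
    ⟪v, x⟫ = v 0 * x 0 + v 1 * x 1 := by
  simp only [PiLp.inner_apply, Fin.sum_univ_two, RCLike.inner_apply, conj_trivial]
  ring

lemma pos_iff_pos_of_root_notMem_Ioo {a b d e s s' : ℝ} (hroot : -e / d ∉ Ioo a b)
    (hs : s ∈ Ioo a b) (hs' : s' ∈ Ioo a b) : 0 < s * d + e ↔ 0 < s' * d + e := by
  rcases eq_or_ne d 0 with rfl | hd
  · simp
  have factor : ∀ t, t * d + e = (t - -e / d) * d := fun t => by field_simp; ring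
  rw [factor, factor]
  rcases le_or_gt (-e / d) a with hleft | hright
  · rw [mul_pos_iff_of_pos_left (by linarith [hs.1]), mul_pos_iff_of_pos_left (by linarith [hs'.1])]
  · have hb : b ≤ -e / d := not_lt.mp fun h => hroot ⟨hright, h⟩
    rw [← neg_mul_neg, ← neg_mul_neg (s' - _), mul_pos_iff_of_pos_left (by linarith [hs.2]),
      mul_pos_iff_of_pos_left (by linarith [hs'.2])]

section AUC

variable {np nn : ℕ} (xp : Fin np → EuclideanSpace ℝ (Fin 2)) (xn : Fin nn → EuclideanSpace ℝ (Fin 2))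

lemma AUC_congr {w w' : EuclideanSpace ℝ (Fin 2)}
    (h : ∀ i j, ⟪w, xp i⟫ > ⟪w, xn j⟫ ↔ ⟪w', xp i⟫ > ⟪w', xn j⟫) :
    AUC xp xn w = AUC xp xn w' := by
  unfold AUC
  simp only [h]

lemma finite_range_AUC : (range (AUC xp xn)).Finite := by
  let auc_of_ranking (r : Fin np → Fin nn → Bool) : ℝ :=
    (1 / ((np : ℝ) * (nn : ℝ))) * ∑ i, ∑ j, if r i j then (1 : ℝ) else 0
  refine (finite_range auc_of_ranking).subset ?_
  rintro _ ⟨w, rfl⟩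
  exact ⟨fun i j => decide (⟪w, xp i⟫ > ⟪w, xn j⟫), by simp [auc_of_ranking, AUC]⟩

end AUC

theorem stmt_9_general {np nn : ℕ}
    (xp : Fin np → EuclideanSpace ℝ (Fin 2))
    (xn : Fin nn → EuclideanSpace ℝ (Fin 2))
    (S : Set ℝ)
    (hS : S = {s | ∃ i j, s = -(xp i 1 - xn j 1) / (xp i 0 - xn j 0)})
    (w : ℝ → EuclideanSpace ℝ (Fin 2))
    (hw : ∀ s, w s = ![s, 1]) :
    (∀ a b : ℝ, Set.Ioo a b ⊆ Sᶜ →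
      ∀ s ∈ Set.Ioo a b, ∀ s' ∈ Set.Ioo a b, AUC xp xn (w s) = AUC xp xn (w s')) ∧
    (Set.range (fun s => AUC xp xn (w s))).Finite := by
  have ranked_iff : ∀ s i j,
      ⟪w s, xp i⟫ > ⟪w s, xn j⟫ ↔ 0 < s * (xp i 0 - xn j 0) + (xp i 1 - xn j 1) := by
    intro s i j
    rw [gt_iff_lt, ← sub_pos]
    simp only [EuclideanSpace.inner_fin_two, hw, Matrix.cons_val_zero, Matrix.cons_val_one]
    ring_nf
  refine ⟨fun a b hab s hs s' hs' => AUC_congr xp xn fun i j => ?_,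
    (finite_range_AUC xp xn).subset (range_comp_subset_range w (AUC xp xn))⟩
  rw [ranked_iff, ranked_iff]
  exact pos_iff_pos_of_root_notMem_Ioo (fun h => hab h (hS ▸ ⟨i, j, rfl⟩)) hs hs'

theorem stmt_9 {np nn : ℕ} (hnp : 0 < np) (hnn : 0 < nn)
    (xp : Fin np → EuclideanSpace ℝ (Fin 2))
    (xn : Fin nn → EuclideanSpace ℝ (Fin 2))
    (hx : ∀ i j, xp i 0 ≠ xn j 0)
    (S : Set ℝ)
    (hS : S = {s | ∃ i j, s = -(xp i 1 - xn j 1) / (xp i 0 - xn j 0)})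
    (w : ℝ → EuclideanSpace ℝ (Fin 2))
    (hw : ∀ s, w s = ![s, 1]) :
    (∀ a b : ℝ, Set.Ioo a b ⊆ Sᶜ →
      ∀ s ∈ Set.Ioo a b, ∀ s' ∈ Set.Ioo a b, AUC xp xn (w s) = AUC xp xn (w s')) ∧
    (Set.range (fun s => AUC xp xn (w s))).Finite :=
  stmt_9_general xp xn S hS w hw
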